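/- Let G be a locally compact abelian topological group and let φ ∈ COS(G). Then there exists a continuous character χ : G → S¹ (a continuous homomorphism of G into the circle group S¹ = {z ∈ ℂ : |z| = 1}) such that φ(x) = (χ(x) + conj(χ(x)))/2 for all x ∈ G. In particular, ‖φ‖_∞ ≤ 1. -/

import Mathlib

/-!
A bounded d'Alembert function `φ` behaves like `cos`. If `φ y₀ ^ 2 ≠ 1` for some `y₀`, then
`s x = (φ (x + y₀) - φ x * φ y₀) / √(φ y₀ ^ 2 - 1)` satisfies the addition formulas
`s (x + y) = φ x * s y + s x * φ y` and `φ (x + y) = φ x * φ y + s x * s y`, so `χ = φ + s` is an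
additive character with `φ x = (χ x + χ (-x)) / 2`; if `φ ^ 2 = 1` everywhere, `φ` itself is a
character (take `s = 0`). With `φ`, `χ` is bounded, and a bounded character has modulus one since
`χ (n • x) = χ x ^ n`; hence `χ (-x) = conj (χ x)`.
-/

/-- The cosine class `COS(G)`: nonzero bounded continuous `φ : G → ℂ` satisfying the
d'Alembert equation `φ(x) φ(y) = (φ(x+y) + φ(x-y))/2`. -/
def CosClass (G : Type*) [AddCommGroup G] [TopologicalSpace G] : Set (G → ℂ) :=
  {φ | Continuous φ ∧ (∃ C, ∀ x, ‖φ x‖ ≤ C) ∧ φ ≠ 0 ∧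
    ∀ x y, φ x * φ y = (φ (x + y) + φ (x - y)) / 2}

def DAlembert {G K : Type*} [AddCommGroup G] [Field K] (φ : G → K) : Prop :=
  ∀ x y, φ x * φ y = (φ (x + y) + φ (x - y)) / 2

namespace DAlembert

variable {G K : Type*} [AddCommGroup G]

section Field

variable [Field K]

/-- With `m = 1 / √(φ y₀ ^ 2 - 1)` this is the `i sin` partner of `φ = cos`. -/
def sine (φ : G → K) (y₀ : G) (m : K) (x : G) : K :=
  m * (φ (x + y₀) - φ x * φ y₀)

variable [CharZero K] {φ : G → K}

theorem map_zero (hφ : DAlembert φ) (hne : φ ≠ 0) : φ 0 = 1 := by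
  obtain ⟨x, hx⟩ := Function.ne_iff.mp hne
  have h := hφ x 0
  rw [add_zero, sub_zero] at h
  exact mul_left_cancel₀ hx (by linear_combination h)

theorem map_neg (hφ : DAlembert φ) (h0 : φ 0 = 1) (x : G) : φ (-x) = φ x := by
  have h := hφ 0 x
  rw [zero_add, zero_sub, h0] at h
  linear_combination -2 * h

theorem map_add_of_sq_eq_one (hφ : DAlembert φ) (hsq : ∀ x, φ x ^ 2 = 1) (x y : G) :
    φ (x + y) = φ x * φ y := by
  have h := hφ x y
  -- `(u - v) ^ 2 = 2 u ^ 2 + 2 v ^ 2 - (u + v) ^ 2 = 4 - 4 (φ x * φ y) ^ 2` for `u, v = φ (x ± y)`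
  have hsq_sub : (φ (x + y) - φ (x - y)) ^ 2 = 0 := by
    linear_combination 2 * hsq (x + y) + 2 * hsq (x - y) - 4 * φ x ^ 2 * hsq y - 4 * hsq x
      + 2 * (φ (x + y) + φ (x - y) + 2 * φ x * φ y) * h
  linear_combination -h + sub_eq_zero.mp (pow_eq_zero_iff two_ne_zero |>.mp hsq_sub) / 2

variable {y₀ : G} {m : K}

theorem sine_add (hφ : DAlembert φ) (x y : G) :
    sine φ y₀ m (x + y) = φ x * sine φ y₀ m y + sine φ y₀ m x * φ y := by
  have h1 := hφ x (y + y₀)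
  have h2 := hφ (x + y₀) y
  have h3 := hφ x y
  have h4 := hφ (x - y) y₀
  rw [← add_assoc, ← sub_sub] at h1
  rw [add_right_comm, ← sub_add_eq_add_sub] at h2
  simp only [sine]
  linear_combination m * (-h1 - h2 + 2 * φ y₀ * h3 + h4)

theorem sine_mul_sine (hφ : DAlembert φ) (x y : G) :
    sine φ y₀ m x * sine φ y₀ m y = m ^ 2 * (φ y₀ ^ 2 - 1) * (φ (x + y) - φ x * φ y) := by
  have k1 := hφ (x + y₀) (y + y₀)
  have k2 := hφ (x + y₀) y
  have k3 := hφ x (y + y₀)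
  have k4 := hφ x y
  have k5 := hφ (x + y + y₀) y₀
  have k6 := hφ (x - y) y₀
  simp only [show x + y₀ + (y + y₀) = x + y + y₀ + y₀ by abel,
    show x + y₀ - (y + y₀) = x - y by abel, show x + y₀ + y = x + y + y₀ by abel,
    show x + y₀ - y = x - y + y₀ by abel, show x + (y + y₀) = x + y + y₀ by abel,
    show x - (y + y₀) = x - y - y₀ by abel, add_sub_cancel_right] at k1 k2 k3 k5
  simp only [sine]
  linear_combination
    m ^ 2 * (k1 - φ y₀ * k2 - φ y₀ * k3 + (2 * φ y₀ ^ 2 - 1) * k4 - k5 + φ y₀ * k6)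

theorem sine_neg (hφ : DAlembert φ) (h0 : φ 0 = 1) (x : G) :
    sine φ y₀ m (-x) = -sine φ y₀ m x := by
  have h := hφ x y₀
  simp only [sine, map_neg hφ h0, show -x + y₀ = -(x - y₀) by abel]
  linear_combination -2 * m * h

theorem exists_sine_mul_sine_eq [IsAlgClosed K] (hφ : DAlembert φ) :
    ∃ y₀ m, ∀ x y, sine φ y₀ m x * sine φ y₀ m y = φ (x + y) - φ x * φ y := by
  by_cases hsq : ∀ y, φ y ^ 2 = 1
  · exact ⟨0, 0, fun x y => by simp [sine, map_add_of_sq_eq_one hφ hsq]⟩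
  push Not at hsq
  obtain ⟨y₀, hy₀⟩ := hsq
  obtain ⟨μ, hμ⟩ := IsAlgClosed.exists_pow_nat_eq (φ y₀ ^ 2 - 1) two_pos
  have hμ0 : μ ≠ 0 := by
    rintro rfl
    exact hy₀ (by linear_combination -hμ)
  refine ⟨y₀, μ⁻¹, fun x y => ?_⟩
  rw [sine_mul_sine hφ, ← hμ, ← mul_pow, inv_mul_cancel₀ hμ0, one_pow, one_mul]

/-- The analogue of `exp (i x) = cos x + i sin x`. -/
def toAddChar (hφ : DAlembert φ) (h0 : φ 0 = 1)
    (hs : ∀ x y, sine φ y₀ m x * sine φ y₀ m y = φ (x + y) - φ x * φ y) : AddChar G K where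
  toFun x := φ x + sine φ y₀ m x
  map_zero_eq_one' := by simp [sine, h0]
  map_add_eq_mul' x y := by linear_combination sine_add hφ x y - hs x y

theorem toAddChar_apply_add_apply_neg (hφ : DAlembert φ) (h0 : φ 0 = 1)
    (hs : ∀ x y, sine φ y₀ m x * sine φ y₀ m y = φ (x + y) - φ x * φ y) (x : G) :
    hφ.toAddChar h0 hs x + hφ.toAddChar h0 hs (-x) = 2 * φ x := by
  simp only [toAddChar, AddChar.coe_mk, map_neg hφ h0, sine_neg hφ h0]
  ring

end Field

theorem continuous_sine [TopologicalSpace G] [SeparatelyContinuousAdd G] [Field K]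
    [TopologicalSpace K] [IsTopologicalRing K] {φ : G → K} (hc : Continuous φ) (y₀ : G) (m : K) :
    Continuous (sine φ y₀ m) :=
  continuous_const.mul ((hc.comp (continuous_add_const y₀)).sub (hc.mul continuous_const))

theorem norm_sine_le [NormedField K] {φ : G → K} {C : ℝ} (hC : ∀ x, ‖φ x‖ ≤ C) (y₀ : G) (m : K)
    (x : G) : ‖sine φ y₀ m x‖ ≤ ‖m‖ * (C + C * C) := by
  have hC0 : 0 ≤ C := (norm_nonneg _).trans (hC x)
  rw [sine, norm_mul]
  gcongr
  calc ‖φ (x + y₀) - φ x * φ y₀‖ ≤ ‖φ (x + y₀)‖ + ‖φ x‖ * ‖φ y₀‖ := by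
        rw [← norm_mul]; exact norm_sub_le _ _
    _ ≤ C + C * C := by gcongr <;> apply hC

end DAlembert

theorem AddChar.norm_apply_eq_one_of_bounded {G K : Type*} [AddGroup G] [NormedDivisionRing K]
    (ψ : AddChar G K) {C : ℝ} (hC : ∀ x, ‖ψ x‖ ≤ C) (x : G) : ‖ψ x‖ = 1 := by
  have hle : ∀ x, ‖ψ x‖ ≤ 1 := fun x => by
    by_contra! h
    obtain ⟨n, hn⟩ := pow_unbounded_of_one_lt C h
    have := hC (n • x)
    rw [map_nsmul_eq_pow, norm_pow] at this
    linarith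
  have hmul : ‖ψ x‖ * ‖ψ (-x)‖ = 1 := by
    rw [← norm_mul, ← map_add_eq_mul, add_neg_cancel, map_zero_eq_one, norm_one]
  nlinarith [hle x, hle (-x), norm_nonneg (ψ x)]

theorem cosClass_eq_re_character_general {G : Type*} [AddCommGroup G] [TopologicalSpace G]
    [IsTopologicalAddGroup G]
    (φ : G → ℂ) (hφ : φ ∈ CosClass G) :
    (∃ χ : G → ℂ, Continuous χ ∧ (∀ x, ‖χ x‖ = 1) ∧
      (∀ x y, χ (x + y) = χ x * χ y) ∧
      ∀ x, φ x = (χ x + (starRingEnd ℂ) (χ x)) / 2) ∧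
    ∀ x, ‖φ x‖ ≤ 1 := by
  obtain ⟨hcont, ⟨C, hC⟩, hne, hd⟩ := hφ
  have hd : DAlembert φ := hd
  have h0 := hd.map_zero hne
  obtain ⟨y₀, m, hs⟩ := hd.exists_sine_mul_sine_eq
  set χ := hd.toAddChar h0 hs
  have hχ_norm : ∀ x, ‖χ x‖ = 1 := χ.norm_apply_eq_one_of_bounded fun x =>
    (norm_add_le _ _).trans (add_le_add (hC x) (DAlembert.norm_sine_le hC y₀ m x))
  have hχ_neg : ∀ x, χ (-x) = starRingEnd ℂ (χ x) := fun x => by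
    rw [AddChar.map_neg_eq_inv, Complex.inv_eq_conj (hχ_norm x)]
  have hrep : ∀ x, φ x = (χ x + χ (-x)) / 2 := fun x => by
    rw [hd.toAddChar_apply_add_apply_neg h0 hs]; ring
  refine ⟨⟨χ, hcont.add (DAlembert.continuous_sine hcont y₀ m), hχ_norm, χ.map_add_eq_mul,
    fun x => hχ_neg x ▸ hrep x⟩, fun x => ?_⟩
  calc ‖φ x‖ = ‖χ x + χ (-x)‖ / 2 := by rw [hrep x, norm_div, Complex.norm_two]
    _ ≤ (‖χ x‖ + ‖χ (-x)‖) / 2 := by gcongr; exact norm_add_le _ _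
    _ = 1 := by rw [hχ_norm, hχ_norm]; norm_num

/-- Every `φ ∈ COS(G)` is of the form `φ = (χ + conj χ)/2` for some
continuous character `χ : G → S¹`; in particular `‖φ‖_∞ ≤ 1`. -/
theorem cosClass_eq_re_character {G : Type*} [AddCommGroup G] [TopologicalSpace G]
    [IsTopologicalAddGroup G] [LocallyCompactSpace G] [T2Space G]
    (φ : G → ℂ) (hφ : φ ∈ CosClass G) :
    (∃ χ : G → ℂ, Continuous χ ∧ (∀ x, ‖χ x‖ = 1) ∧
      (∀ x y, χ (x + y) = χ x * χ y) ∧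
      ∀ x, φ x = (χ x + (starRingEnd ℂ) (χ x)) / 2) ∧
    ∀ x, ‖φ x‖ ≤ 1 :=
  cosClass_eq_re_character_general φ hφ
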